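/- arXiv:1001.0326 — 4 statements merged into one kernel-verified Lean document; each statement's English description precedes it below -/
import Mathlib

section
/- Let G be a locally compact group with left Haar measure μ, let d be a left-invariant metric on G of at most exponential growth with constants a, b > 0, fix c > b, and set h(g) = e^{-c·d(g,e)} / ∫_G e^{-c·d(x,e)} dμ(x). Then h is a positive integrable function with ∫_G h dμ = 1, and for every g ∈ G and every nonnegative f ∈ L^∞(G): e^{-c·d(g,e)} ∫_G f(z) h(z) dμ(z) ≤ ∫_G f(z) h(gz) dμ(z) ≤ e^{c·d(g,e)} ∫_G f(z) h(z) dμ(z). -/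
open MeasureTheory

/-!
Left invariance and the triangle inequality give `|d(gz, e) - d(z, e)| ≤ d(g, e)`, so
`e^{-c·d(g,e)} h(z) ≤ h(gz) ≤ e^{c·d(g,e)} h(z)` pointwise and the two integral inequalities
follow by integrating against `f ≥ 0`. That `h` is well defined rests on integrability of
`e^{-c·d(·,e)}`: on the shell `n ≤ d(·,e) < n + 1` it is at most `e^{-cn}`, while the shell has
measure at most `a e^{b(n+1)}`, and these bounds are summable because `c > b`.
-/

lemma nonneg_of_triangle {X : Type*} {d : X → X → ℝ} (hself : ∀ x, d x x = 0)
    (hsymm : ∀ x y, d x y = d y x) (htri : ∀ x y z, d x z ≤ d x y + d y z) (x y : X) :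
    0 ≤ d x y := by
  have := htri x y x
  rw [hself, hsymm y x] at this
  linarith

lemma abs_sub_le_of_leftInvariant {G : Type*} [Group G] {d : G → G → ℝ}
    (hsymm : ∀ x y, d x y = d y x) (htri : ∀ x y z, d x z ≤ d x y + d y z)
    (hinv : ∀ g x y, d (g * x) (g * y) = d x y) (g z : G) :
    |d (g * z) 1 - d z 1| ≤ d g 1 := by
  have hshift : d (g * z) g = d z 1 := by simpa using hinv g z 1
  have h₁ := htri (g * z) g 1
  have h₂ := htri (g * z) 1 g
  rw [hshift] at h₁ h₂
  rw [hsymm 1 g] at h₂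
  rw [abs_sub_le_iff]
  constructor <;> linarith

lemma exp_neg_mul_bounds_of_abs_sub_le {s t u c : ℝ} (hc : 0 ≤ c) (h : |s - t| ≤ u) :
    Real.exp (-c * u) * Real.exp (-c * t) ≤ Real.exp (-c * s) ∧
      Real.exp (-c * s) ≤ Real.exp (c * u) * Real.exp (-c * t) := by
  obtain ⟨h₁, h₂⟩ := abs_sub_le_iff.1 h
  simp only [← Real.exp_add, Real.exp_le_exp]
  constructor <;> nlinarith

section FloorShells

variable {X : Type*} [MeasurableSpace X] {μ : Measure X} {r : X → ℝ}

lemma lintegral_eq_tsum_setLIntegral_preimage_singleton {ι : Type*} [Countable ι]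
    [MeasurableSpace ι] [MeasurableSingletonClass ι] {k : X → ι} (hk : Measurable k)
    (F : X → ENNReal) :
    ∫⁻ x, F x ∂μ = ∑' i, ∫⁻ x in k ⁻¹' {i}, F x ∂μ := by
  have hunion : ⋃ i, k ⁻¹' {i} = Set.univ := by
    rw [← Set.preimage_iUnion, Set.iUnion_of_singleton, Set.preimage_univ]
  rw [← setLIntegral_univ, ← hunion,
    lintegral_iUnion (fun i => hk (measurableSet_singleton i)) (pairwise_disjoint_fiber k)]

lemma setLIntegral_floor_eq_exp_neg_mul_le (hr0 : ∀ x, 0 ≤ r x) {a b c : ℝ} (hc : 0 ≤ c)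
    (n : ℕ)
    (hgrowth : μ {x | r x < (n + 1 : ℕ)} ≤ ENNReal.ofReal (a * Real.exp (b * (n + 1 : ℕ)))) :
    ∫⁻ x in {x | ⌊r x⌋₊ = n}, ENNReal.ofReal (Real.exp (-c * r x)) ∂μ ≤
      ENNReal.ofReal (a * Real.exp b * Real.exp (b - c) ^ n) := by
  have hμ : μ {x | ⌊r x⌋₊ = n} ≤ ENNReal.ofReal (a * Real.exp (b * (n + 1 : ℕ))) := by
    refine (measure_mono fun x (hx : ⌊r x⌋₊ = n) => ?_).trans hgrowth
    simpa [hx] using Nat.lt_floor_add_one (r x)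
  calc ∫⁻ x in {x | ⌊r x⌋₊ = n}, ENNReal.ofReal (Real.exp (-c * r x)) ∂μ
      ≤ ∫⁻ _ in {x | ⌊r x⌋₊ = n}, ENNReal.ofReal (Real.exp (-c * n)) ∂μ := by
        refine setLIntegral_mono measurable_const fun x (hx : ⌊r x⌋₊ = n) => ?_
        have hn : (n : ℝ) ≤ r x := (Nat.le_floor_iff (hr0 x)).1 hx.ge
        exact ENNReal.ofReal_le_ofReal (Real.exp_le_exp.2 (by nlinarith))
    _ = ENNReal.ofReal (Real.exp (-c * n)) * μ {x | ⌊r x⌋₊ = n} :=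
        setLIntegral_const _ _
    _ ≤ ENNReal.ofReal (Real.exp (-c * n)) *
          ENNReal.ofReal (a * Real.exp (b * (n + 1 : ℕ))) := by gcongr
    _ = ENNReal.ofReal (a * Real.exp b * Real.exp (b - c) ^ n) := by
        rw [← ENNReal.ofReal_mul (Real.exp_pos _).le]
        congr 1
        simp only [← Real.exp_nat_mul, Nat.cast_add, Nat.cast_one]
        rw [mul_assoc, ← Real.exp_add, mul_left_comm, ← Real.exp_add]
        ring_nf

lemma integrable_exp_neg_mul_of_measure_lt_le (hr : Measurable r) (hr0 : ∀ x, 0 ≤ r x)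
    {a b c : ℝ} (ha : 0 ≤ a) (hc : 0 ≤ c) (hbc : b < c)
    (hgrowth : ∀ n : ℕ, 1 ≤ n → μ {x | r x < n} ≤ ENNReal.ofReal (a * Real.exp (b * n))) :
    Integrable (fun x => Real.exp (-c * r x)) μ := by
  refine ⟨(hr.const_mul (-c)).exp.aestronglyMeasurable, ?_⟩
  rw [hasFiniteIntegral_iff_ofReal (.of_forall fun x => (Real.exp_pos _).le),
    lintegral_eq_tsum_setLIntegral_preimage_singleton (Nat.measurable_floor.comp hr)]
  have hgeom : Summable fun n : ℕ => a * Real.exp b * Real.exp (b - c) ^ n :=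
    (summable_geometric_of_lt_one (Real.exp_nonneg _)
      (Real.exp_lt_one_iff.2 (by linarith))).mul_left _
  calc _ ≤ ∑' n : ℕ, ENNReal.ofReal (a * Real.exp b * Real.exp (b - c) ^ n) :=
        ENNReal.tsum_le_tsum fun n =>
          setLIntegral_floor_eq_exp_neg_mul_le hr0 hc n (hgrowth (n + 1) (by omega))
    _ = ENNReal.ofReal (∑' n : ℕ, a * Real.exp b * Real.exp (b - c) ^ n) :=
        (ENNReal.ofReal_tsum_of_nonneg (fun n => by positivity) hgeom).symm
    _ < ⊤ := ENNReal.ofReal_lt_top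

end FloorShells

lemma integral_mul_le_integral_mul_of_le {X : Type*} [MeasurableSpace X] {μ : Measure X}
    {f w w' : X → ℝ} {M : ℝ} (hw : Integrable w μ) (hw' : Integrable w' μ)
    (hf : AEStronglyMeasurable f μ) (hf0 : ∀ x, 0 ≤ f x) (hfM : ∀ x, f x ≤ M)
    (hle : ∀ x, w x ≤ w' x) :
    ∫ x, f x * w x ∂μ ≤ ∫ x, f x * w' x ∂μ := by
  have hfM' : ∀ᵐ x ∂μ, ‖f x‖ ≤ M :=
    .of_forall fun x => (Real.norm_of_nonneg (hf0 x)).trans_le (hfM x)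
  exact integral_mono (hw.bdd_mul hf hfM') (hw'.bdd_mul hf hfM')
    fun x => mul_le_mul_of_nonneg_left (hle x) (hf0 x)

theorem stmt_4_general {G : Type*} [Group G] [TopologicalSpace G] [MeasurableSpace G]
    (μ : Measure G) [μ.IsHaarMeasure]
    (d : G → G → ℝ)
    (hd_self : ∀ x y : G, d x y = 0 ↔ x = y)
    (hd_symm : ∀ x y : G, d x y = d y x)
    (hd_tri : ∀ x y z : G, d x z ≤ d x y + d y z)
    (hd_inv : ∀ g x y : G, d (g * x) (g * y) = d x y)
    (hd_meas : ∀ g : G, Measurable fun z : G => d (g * z) 1)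
    (a b : ℝ) (ha : 0 < a) (hb : 0 < b)
    (hgrowth : ∀ n : ℕ, 1 ≤ n →
      μ {g : G | d g 1 < (n : ℝ)} ≤ ENNReal.ofReal (a * Real.exp (b * n)))
    (c : ℝ) (hc : b < c)
    (h : G → ℝ)
    (hdef : ∀ g : G,
      h g = Real.exp (-c * d g 1) / ∫ x, Real.exp (-c * d x 1) ∂μ) :
    (∀ g : G, 0 < h g) ∧ Integrable h μ ∧ (∫ g, h g ∂μ) = 1 ∧
    ∀ (g : G) (f : G → ℝ), Measurable f → (∀ z, 0 ≤ f z) → (∃ M : ℝ, ∀ z, f z ≤ M) →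
      Real.exp (-c * d g 1) * ∫ z, f z * h z ∂μ ≤ ∫ z, f z * h (g * z) ∂μ ∧
      ∫ z, f z * h (g * z) ∂μ ≤ Real.exp (c * d g 1) * ∫ z, f z * h z ∂μ := by
  have hc0 : 0 ≤ c := hb.le.trans hc.le
  have hd0 := nonneg_of_triangle (fun x => (hd_self x x).2 rfl) hd_symm hd_tri
  have hφ : Integrable (fun z => Real.exp (-c * d z 1)) μ :=
    integrable_exp_neg_mul_of_measure_lt_le (by simpa using hd_meas 1) (hd0 · 1) ha.le hc0 hc
      hgrowth
  have hI := integral_exp_pos hφ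
  set I := ∫ x, Real.exp (-c * d x 1) ∂μ
  have hh_eq : h = fun z => Real.exp (-c * d z 1) / I := funext hdef
  have hpos (g : G) : 0 < h g := hdef g ▸ div_pos (Real.exp_pos _) hI
  have hh : Integrable h μ := hh_eq ▸ hφ.div_const _
  have hbounds (g z : G) : Real.exp (-c * d g 1) * h z ≤ h (g * z) ∧
      h (g * z) ≤ Real.exp (c * d g 1) * h z := by
    obtain ⟨hlow, hup⟩ := exp_neg_mul_bounds_of_abs_sub_le hc0
      (abs_sub_le_of_leftInvariant hd_symm hd_tri hd_inv g z)
    simp only [hdef, ← mul_div_assoc]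
    exact ⟨div_le_div_of_nonneg_right hlow hI.le, div_le_div_of_nonneg_right hup hI.le⟩
  refine ⟨hpos, hh, by rw [hh_eq, integral_div, div_self hI.ne'], ?_⟩
  rintro g f hf hf0 ⟨M, hfM⟩
  have hhg_meas : Measurable fun z => h (g * z) := by
    simpa only [hdef] using ((hd_meas g).const_mul (-c)).exp.div_const _
  have hhg : Integrable (fun z => h (g * z)) μ :=
    (hh.const_mul _).mono' hhg_meas.aestronglyMeasurable <| .of_forall fun z =>
      (Real.norm_of_nonneg (hpos _).le).trans_le (hbounds g z).2
  simp only [← integral_const_mul, mul_left_comm (Real.exp _)]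
  exact ⟨integral_mul_le_integral_mul_of_le (hh.const_mul _) hhg hf.aestronglyMeasurable
      hf0 hfM fun z => (hbounds g z).1,
    integral_mul_le_integral_mul_of_le hhg (hh.const_mul _) hf.aestronglyMeasurable
      hf0 hfM fun z => (hbounds g z).2⟩

/-- Lemma 1 of the paper: with `h(g) = e^{-c·d(g,e)} / ∫ e^{-c·d(x,e)} dμ(x)` for `c > b`,
`h` is a positive integrable function of total integral `1`, and for every `g ∈ G` and
nonnegative bounded measurable `f`,
`e^{-c·d(g,e)} ∫ f·h dμ ≤ ∫ f(z) h(gz) dμ(z) ≤ e^{c·d(g,e)} ∫ f·h dμ`. -/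
theorem stmt_4 {G : Type*} [Group G] [TopologicalSpace G] [IsTopologicalGroup G]
    [LocallyCompactSpace G] [SecondCountableTopology G] [MeasurableSpace G] [BorelSpace G]
    (μ : Measure G) [μ.IsHaarMeasure]
    (d : G → G → ℝ)
    (hd_self : ∀ x y : G, d x y = 0 ↔ x = y)
    (hd_symm : ∀ x y : G, d x y = d y x)
    (hd_tri : ∀ x y z : G, d x z ≤ d x y + d y z)
    (hd_inv : ∀ g x y : G, d (g * x) (g * y) = d x y)
    (hd_meas : ∀ g : G, Measurable fun z : G => d (g * z) 1)
    (a b : ℝ) (ha : 0 < a) (hb : 0 < b)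
    (hgrowth : ∀ n : ℕ, 1 ≤ n →
      μ {g : G | d g 1 < (n : ℝ)} ≤ ENNReal.ofReal (a * Real.exp (b * n)))
    (c : ℝ) (hc : b < c)
    (h : G → ℝ)
    (hdef : ∀ g : G,
      h g = Real.exp (-c * d g 1) / ∫ x, Real.exp (-c * d x 1) ∂μ) :
    (∀ g : G, 0 < h g) ∧ Integrable h μ ∧ (∫ g, h g ∂μ) = 1 ∧
    ∀ (g : G) (f : G → ℝ), Measurable f → (∀ z, 0 ≤ f z) → (∃ M : ℝ, ∀ z, f z ≤ M) →
      Real.exp (-c * d g 1) * ∫ z, f z * h z ∂μ ≤ ∫ z, f z * h (g * z) ∂μ ∧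
      ∫ z, f z * h (g * z) ∂μ ≤ Real.exp (c * d g 1) * ∫ z, f z * h z ∂μ :=
  stmt_4_general μ d hd_self hd_symm hd_tri hd_inv hd_meas a b ha hb hgrowth c hc h hdef
end

section
/- Let G be a locally compact group with left Haar measure μ, H a Hilbert space, and R : G → H a bounded continuous map. Let h : G → (0,∞) be integrable with ∫ h dμ = 1, and define R'(x) ∈ L²(G, H, μ) by R'(x)(z) = √(h(z)) · R(z⁻¹ x). Then R' is continuous from G to L²(G, H, μ) and ‖R'(x)‖₂ ≤ sup_{g∈G} ‖R(g)‖ for all x ∈ G. -/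
/-!
Each `R'(x)` is dominated pointwise by `√h · sup ‖R‖`, which is in `L²` because `h` is
integrable. Since `x ↦ R(z⁻¹x)` is continuous for every `z`, dominated convergence in `L²`
gives continuity, and Hölder's inequality `‖√h • f‖₂ ≤ ‖√h‖₂ ‖f‖_∞` with
`‖√h‖₂ = (∫ h)^{1/2} = 1` gives the norm bound.
-/

open MeasureTheory Filter Topology
open scoped ENNReal

section

variable {α E : Type*} {m : MeasurableSpace α} {μ : Measure α} [NormedAddCommGroup E]

theorem tendsto_eLpNorm_sub_of_dominated {ι : Type*} {l : Filter ι} [l.IsCountablyGenerated]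
    {p : ℝ≥0∞} (hp0 : p ≠ 0) (hp : p ≠ ∞) {F : ι → α → E} {f : α → E} {bound : α → ℝ}
    (hF_meas : ∀ᶠ i in l, AEStronglyMeasurable (F i) μ) (hf_meas : AEStronglyMeasurable f μ)
    (h_bound : ∀ᶠ i in l, ∀ᵐ a ∂μ, ‖F i a‖ ≤ bound a) (hf_bound : ∀ᵐ a ∂μ, ‖f a‖ ≤ bound a)
    (bound_memLp : MemLp bound p μ) (h_lim : ∀ᵐ a ∂μ, Tendsto (fun i => F i a) l (𝓝 (f a))) :
    Tendsto (fun i => eLpNorm (F i - f) p μ) l (𝓝 0) := by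
  have hp_pos : 0 < p.toReal := ENNReal.toReal_pos hp0 hp
  have h_lintegral : Tendsto (fun i => ∫⁻ a, ‖F i a - f a‖ₑ ^ p.toReal ∂μ) l
      (𝓝 (∫⁻ _, 0 ∂μ)) := by
    refine tendsto_lintegral_filter_of_dominated_convergence' (fun a => ‖2 * bound a‖ₑ ^ p.toReal)
      ?_ ?_ ?_ ?_
    · filter_upwards [hF_meas] with i hi
      exact (hi.sub hf_meas).enorm.pow_const _
    · filter_upwards [h_bound] with i hi
      filter_upwards [hi, hf_bound] with a hFa hfa
      gcongr
      rw [enorm_le_iff_norm_le, Real.norm_eq_abs]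
      calc ‖F i a - f a‖ ≤ ‖F i a‖ + ‖f a‖ := norm_sub_le _ _
        _ ≤ |2 * bound a| := by linarith [le_abs_self (2 * bound a)]
    · exact (lintegral_rpow_enorm_lt_top_of_eLpNorm_lt_top hp0 hp
        (bound_memLp.const_mul 2).eLpNorm_lt_top).ne
    · filter_upwards [h_lim] with a ha
      have := ((ENNReal.continuous_rpow_const (y := p.toReal)).tendsto _).comp
        (tendsto_sub_nhds_zero_iff.2 ha).enorm
      simpa [Function.comp_def, ENNReal.zero_rpow_of_pos hp_pos] using this
  have h_root := ((ENNReal.continuous_rpow_const (y := 1 / p.toReal)).tendsto _).comp h_lintegral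
  simp only [Function.comp_def, lintegral_zero, one_div,
    ENNReal.zero_rpow_of_pos (inv_pos.2 hp_pos)] at h_root
  simpa only [eLpNorm_eq_lintegral_rpow_enorm_toReal hp0 hp, one_div, Pi.sub_apply] using h_root

theorem continuous_toLp_of_dominated {X : Type*} [TopologicalSpace X] [FirstCountableTopology X]
    {p : ℝ≥0∞} [Fact (1 ≤ p)] (hp : p ≠ ∞) {F : X → α → E} (hF : ∀ x, MemLp (F x) p μ)
    {bound : α → ℝ} (bound_memLp : MemLp bound p μ) (h_bound : ∀ x, ∀ᵐ a ∂μ, ‖F x a‖ ≤ bound a)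
    (h_cont : ∀ᵐ a ∂μ, Continuous fun x => F x a) :
    Continuous fun x => (hF x).toLp (F x) := by
  refine continuous_iff_continuousAt.2 fun x₀ => ?_
  refine (Lp.tendsto_Lp_iff_tendsto_eLpNorm'' _ hF _ (hF x₀)).2 ?_
  exact tendsto_eLpNorm_sub_of_dominated (zero_lt_one.trans_le Fact.out).ne' hp
    (.of_forall fun x => (hF x).1) (hF x₀).1 (.of_forall h_bound) (h_bound x₀) bound_memLp
    (h_cont.mono fun a ha => ha.continuousAt)

theorem memLp_two_sqrt {h : α → ℝ} (h_nonneg : 0 ≤ᵐ[μ] h) (h_int : Integrable h μ) :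
    MemLp (fun z => √(h z)) 2 μ :=
  (memLp_two_iff_integrable_sq (Real.continuous_sqrt.comp_aestronglyMeasurable h_int.1)).2
    (h_int.congr (h_nonneg.mono fun _ hz => (Real.sq_sqrt hz).symm))

theorem eLpNorm_sqrt_two {h : α → ℝ} (h_nonneg : 0 ≤ᵐ[μ] h) (h_int : Integrable h μ) :
    eLpNorm (fun z => √(h z)) 2 μ = ENNReal.ofReal √(∫ z, h z ∂μ) := by
  rw [(memLp_two_sqrt h_nonneg h_int).eLpNorm_eq_integral_rpow_norm two_ne_zero
    ENNReal.ofNat_ne_top, Real.sqrt_eq_rpow]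
  congr 1
  have h_sq : ∀ᵐ z ∂μ, ‖√(h z)‖ ^ (2 : ℝ≥0∞).toReal = h z := h_nonneg.mono fun z hz => by
    simp [Real.sq_sqrt hz]
  rw [integral_congr_ae h_sq]
  norm_num

end

theorem stmt_5_general {G : Type*} [Group G] [TopologicalSpace G] [IsTopologicalGroup G]
    [SecondCountableTopology G] [MeasurableSpace G] [BorelSpace G]
    (μ : Measure G)
    {H : Type*} [NormedAddCommGroup H] [InnerProductSpace ℂ H]
    (R : G → H) (hR_cont : Continuous R) (hR_bdd : BddAbove (Set.range fun g => ‖R g‖))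
    (h : G → ℝ) (h_pos : ∀ z, 0 < h z) (h_int : Integrable h μ) (h_one : (∫ z, h z ∂μ) = 1) :
    ∃ hmem : ∀ x : G, MemLp (fun z => Real.sqrt (h z) • R (z⁻¹ * x)) 2 μ,
      Continuous (fun x : G => (hmem x).toLp (fun z => Real.sqrt (h z) • R (z⁻¹ * x))) ∧
      ∀ x : G, ‖(hmem x).toLp (fun z => Real.sqrt (h z) • R (z⁻¹ * x))‖ ≤ ⨆ g : G, ‖R g‖ := by
  set M := ⨆ g : G, ‖R g‖
  have hM : ∀ g, ‖R g‖ ≤ M := le_ciSup hR_bdd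
  have h_nonneg : 0 ≤ᵐ[μ] h := .of_forall fun z => (h_pos z).le
  have h_sqrt := memLp_two_sqrt h_nonneg h_int
  have hR_shift (x : G) : Continuous fun z : G => R (z⁻¹ * x) := by fun_prop
  have h_bound (x : G) (z : G) : ‖√(h z) • R (z⁻¹ * x)‖ ≤ √(h z) * M := by
    rw [norm_smul, Real.norm_of_nonneg (Real.sqrt_nonneg _)]
    exact mul_le_mul_of_nonneg_left (hM _) (Real.sqrt_nonneg _)
  have hmem (x : G) : MemLp (fun z => √(h z) • R (z⁻¹ * x)) 2 μ :=
    (h_sqrt.mul_const M).of_le (h_sqrt.1.smul (hR_shift x).aestronglyMeasurable)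
      (.of_forall fun z => (h_bound x z).trans (le_abs_self _))
  refine ⟨hmem, continuous_toLp_of_dominated ENNReal.ofNat_ne_top hmem (h_sqrt.mul_const M)
    (fun x => .of_forall (h_bound x)) (.of_forall fun z => by fun_prop), fun x => ?_⟩
  have h_holder : eLpNorm (fun z => √(h z) • R (z⁻¹ * x)) 2 μ
      ≤ eLpNorm (fun z => √(h z)) 2 μ * eLpNorm (fun z => R (z⁻¹ * x)) ∞ μ :=
    eLpNorm_smul_le_eLpNorm_mul_eLpNorm_top 2 _ h_sqrt.1
  rw [eLpNorm_sqrt_two h_nonneg h_int, h_one, Real.sqrt_one, ENNReal.ofReal_one, one_mul,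
    eLpNorm_exponent_top] at h_holder
  rw [Lp.norm_toLp]
  exact ENNReal.toReal_le_of_le_ofReal ((norm_nonneg _).trans (hM 1))
    (h_holder.trans (eLpNormEssSup_le_of_ae_bound (.of_forall fun z => hM _)))

/-- If `R : G → H` is bounded and continuous, `h > 0` is integrable with `∫ h dμ = 1`,
and `R'(x)(z) = √(h z) • R(z⁻¹ x)`, then each `R'(x)` lies in `L²(G, H, μ)`, the map
`x ↦ R'(x)` is continuous into `L²(G, H, μ)`, and `‖R'(x)‖₂ ≤ sup_g ‖R g‖`. -/
theorem stmt_5 {G : Type*} [Group G] [TopologicalSpace G] [IsTopologicalGroup G]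
    [LocallyCompactSpace G] [SecondCountableTopology G] [MeasurableSpace G] [BorelSpace G]
    (μ : Measure G) [μ.IsHaarMeasure]
    {H : Type*} [NormedAddCommGroup H] [InnerProductSpace ℂ H] [CompleteSpace H]
    (R : G → H) (hR_cont : Continuous R) (hR_bdd : BddAbove (Set.range fun g => ‖R g‖))
    (h : G → ℝ) (h_pos : ∀ z, 0 < h z) (h_int : Integrable h μ) (h_one : (∫ z, h z ∂μ) = 1) :
    ∃ hmem : ∀ x : G, MemLp (fun z => Real.sqrt (h z) • R (z⁻¹ * x)) 2 μ,
      Continuous (fun x : G => (hmem x).toLp (fun z => Real.sqrt (h z) • R (z⁻¹ * x))) ∧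
      ∀ x : G, ‖(hmem x).toLp (fun z => Real.sqrt (h z) • R (z⁻¹ * x))‖ ≤ ⨆ g : G, ‖R g‖ :=
  stmt_5_general μ R hR_cont hR_bdd h h_pos h_int h_one
end

section
/- Let G be a locally compact group with left Haar measure μ, let d be a left-invariant metric on G, let c > 0, and let h(z) = e^{-c·d(z,e)}/N for a positive normalizing constant N (assumed finite). Let H be a Hilbert space, R : G → H bounded and continuous, and define R'(x)(z) = √(h(z))·R(z⁻¹x) in L²(G,H,μ). Then for every g ∈ G and every finite linear combination, ‖Σᵢ cᵢ R'(g xᵢ)‖₂² ≤ e^{c·d(g,e)} · ‖Σᵢ cᵢ R'(xᵢ)‖₂², for all n ∈ ℕ, x₁,…,xₙ ∈ G and c₁,…,cₙ ∈ ℂ. -/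
open MeasureTheory

/-! The weight `h z = e^{-c·d(z,e)}/N` is quasi-invariant under left translation: by the
triangle inequality and left invariance of `d`, `h (g * w) ≤ e^{c·d(g,e)} h w`. Since
`‖Σᵢ cᵢ √(h z) R(z⁻¹ y_i)‖² = h z · ‖Σᵢ cᵢ R(z⁻¹ y_i)‖²`, substituting `z = g w` in the left
integral (left invariance of Haar measure) reduces the claim to this pointwise bound. -/

lemma norm_sum_smul_sqrt_smul_sq {ι E : Type*} [Fintype ι] [NormedAddCommGroup E]
    [NormedSpace ℂ E] {a : ℝ} (ha : 0 ≤ a) (coef : ι → ℂ) (v : ι → E) :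
    ‖∑ i, coef i • (Real.sqrt a • v i)‖ ^ 2 = a * ‖∑ i, coef i • v i‖ ^ 2 := by
  have hfactor : ∑ i, coef i • (Real.sqrt a • v i) = Real.sqrt a • ∑ i, coef i • v i := by
    rw [Finset.smul_sum]
    exact Finset.sum_congr rfl fun i _ => smul_comm _ _ _
  rw [hfactor, norm_smul, mul_pow, Real.norm_eq_abs, sq_abs, Real.sq_sqrt ha]

lemma norm_sum_smul_le_of_norm_le {ι E : Type*} [Fintype ι] [NormedAddCommGroup E]
    [NormedSpace ℂ E] {M : ℝ} (coef : ι → ℂ) {v : ι → E} (hv : ∀ i, ‖v i‖ ≤ M) :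
    ‖∑ i, coef i • v i‖ ≤ (∑ i, ‖coef i‖) * M :=
  calc ‖∑ i, coef i • v i‖ ≤ ∑ i, ‖coef i • v i‖ := norm_sum_le _ _
    _ ≤ ∑ i, ‖coef i‖ * M := Finset.sum_le_sum fun i _ => by
        rw [norm_smul]; exact mul_le_mul_of_nonneg_left (hv i) (norm_nonneg _)
    _ = (∑ i, ‖coef i‖) * M := (Finset.sum_mul ..).symm

section LeftInvariantMetric

variable {G : Type*} [Group G] {d : G → G → ℝ}

lemma dist_one_le_dist_mul_one_add (hd_symm : ∀ x y : G, d x y = d y x)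
    (hd_tri : ∀ x y z : G, d x z ≤ d x y + d y z)
    (hd_inv : ∀ g x y : G, d (g * x) (g * y) = d x y) (g w : G) :
    d w 1 ≤ d (g * w) 1 + d g 1 :=
  calc d w 1 = d (g * w) g := by rw [← hd_inv g w 1, mul_one]
    _ ≤ d (g * w) 1 + d 1 g := hd_tri _ _ _
    _ = d (g * w) 1 + d g 1 := by rw [hd_symm 1 g]

lemma exp_neg_dist_mul_le (hd_symm : ∀ x y : G, d x y = d y x)
    (hd_tri : ∀ x y z : G, d x z ≤ d x y + d y z)
    (hd_inv : ∀ g x y : G, d (g * x) (g * y) = d x y) {c : ℝ} (hc : 0 ≤ c) (g w : G) :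
    Real.exp (-c * d (g * w) 1) ≤ Real.exp (c * d g 1) * Real.exp (-c * d w 1) := by
  rw [← Real.exp_add, Real.exp_le_exp]
  nlinarith [dist_one_le_dist_mul_one_add hd_symm hd_tri hd_inv g w]

end LeftInvariantMetric

lemma integral_mul_comp_mul_left_le {G : Type*} [Group G] [MeasurableSpace G]
    [MeasurableMul G] {μ : Measure G} [μ.IsMulLeftInvariant] {h Q : G → ℝ}
    (hh_nonneg : ∀ z, 0 ≤ h z) (hh_int : Integrable h μ) (hQ_nonneg : ∀ z, 0 ≤ Q z)
    (hQ_meas : AEStronglyMeasurable Q μ) {B : ℝ} (hQ_le : ∀ z, Q z ≤ B) {g : G} {C : ℝ}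
    (hhg : ∀ w, h (g * w) ≤ C * h w) :
    ∫ z, h z * Q (g⁻¹ * z) ∂μ ≤ C * ∫ z, h z * Q z ∂μ := by
  have hQ_bdd : ∀ᵐ z ∂μ, ‖Q z‖ ≤ B := Filter.Eventually.of_forall fun z => by
    rw [Real.norm_of_nonneg (hQ_nonneg z)]; exact hQ_le z
  rw [← integral_mul_left_eq_self _ g, ← integral_const_mul]
  simp only [inv_mul_cancel_left]
  refine integral_mono_of_nonneg (Filter.Eventually.of_forall fun w => ?_)
    ((hh_int.mul_bdd hQ_meas hQ_bdd).const_mul C) (Filter.Eventually.of_forall fun w => ?_)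
  · exact mul_nonneg (hh_nonneg _) (hQ_nonneg w)
  · show h (g * w) * Q w ≤ C * (h w * Q w)
    rw [← mul_assoc]
    exact mul_le_mul_of_nonneg_right (hhg w) (hQ_nonneg w)

theorem stmt_6_general {G : Type*} [Group G] [TopologicalSpace G] [IsTopologicalGroup G]
    [MeasurableSpace G] [BorelSpace G]
    (μ : Measure G) [μ.IsHaarMeasure]
    (d : G → G → ℝ)
    (hd_symm : ∀ x y : G, d x y = d y x)
    (hd_tri : ∀ x y z : G, d x z ≤ d x y + d y z)
    (hd_inv : ∀ g x y : G, d (g * x) (g * y) = d x y)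
    (c : ℝ) (hc : 0 < c)
    (N : ℝ) (hN_pos : 0 < N)
    (hN_int : Integrable (fun x => Real.exp (-c * d x 1)) μ)
    {H : Type*} [NormedAddCommGroup H] [InnerProductSpace ℂ H]
    (R : G → H) (hR_cont : Continuous R) (hR_bdd : BddAbove (Set.range fun g => ‖R g‖))
    (h : G → ℝ) (hdef : ∀ z : G, h z = Real.exp (-c * d z 1) / N)
    (g : G) (n : ℕ) (x : Fin n → G) (coef : Fin n → ℂ) :
    ∫ z, ‖∑ i, coef i • (Real.sqrt (h z) • R (z⁻¹ * (g * x i)))‖ ^ 2 ∂μ ≤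
      Real.exp (c * d g 1) *
        ∫ z, ‖∑ i, coef i • (Real.sqrt (h z) • R (z⁻¹ * x i))‖ ^ 2 ∂μ := by
  have hh_nonneg : ∀ z, 0 ≤ h z := fun z => by rw [hdef]; positivity
  have hh_int : Integrable h μ := by
    simpa only [← funext hdef] using hN_int.div_const N
  have hhg : ∀ w, h (g * w) ≤ Real.exp (c * d g 1) * h w := fun w => by
    rw [hdef, hdef, ← mul_div_assoc]
    exact div_le_div_of_nonneg_right (exp_neg_dist_mul_le hd_symm hd_tri hd_inv hc.le g w)
      hN_pos.le
  obtain ⟨M, hM⟩ := hR_bdd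
  set Q : G → ℝ := fun w => ‖∑ i, coef i • R (w⁻¹ * x i)‖ ^ 2
  have hQ_cont : Continuous Q := by fun_prop
  have hQ_le : ∀ w, Q w ≤ ((∑ i, ‖coef i‖) * M) ^ 2 := fun w =>
    pow_le_pow_left₀ (norm_nonneg _)
      (norm_sum_smul_le_of_norm_le coef fun i => hM ⟨_, rfl⟩) 2
  simp only [norm_sum_smul_sqrt_smul_sq (hh_nonneg _)]
  convert integral_mul_comp_mul_left_le hh_nonneg hh_int (fun w => by positivity)
    hQ_cont.aestronglyMeasurable hQ_le hhg using 5 with z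
  simp only [mul_inv_rev, inv_inv, mul_assoc]

/-- With `h(z) = e^{-c·d(z,e)}/N` and `R'(x)(z) = √(h z) • R(z⁻¹x)`, for every `g ∈ G`
and every finite linear combination,
`‖Σᵢ cᵢ R'(g xᵢ)‖₂² ≤ e^{c·d(g,e)} ‖Σᵢ cᵢ R'(xᵢ)‖₂²`. -/
theorem stmt_6 {G : Type*} [Group G] [TopologicalSpace G] [IsTopologicalGroup G]
    [LocallyCompactSpace G] [SecondCountableTopology G] [MeasurableSpace G] [BorelSpace G]
    (μ : Measure G) [μ.IsHaarMeasure]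
    (d : G → G → ℝ)
    (hd_self : ∀ x y : G, d x y = 0 ↔ x = y)
    (hd_symm : ∀ x y : G, d x y = d y x)
    (hd_tri : ∀ x y z : G, d x z ≤ d x y + d y z)
    (hd_inv : ∀ g x y : G, d (g * x) (g * y) = d x y)
    (hd_meas : Measurable fun z : G => d z 1)
    (c : ℝ) (hc : 0 < c)
    (N : ℝ) (hN : N = ∫ x, Real.exp (-c * d x 1) ∂μ) (hN_pos : 0 < N)
    (hN_int : Integrable (fun x => Real.exp (-c * d x 1)) μ)
    {H : Type*} [NormedAddCommGroup H] [InnerProductSpace ℂ H] [CompleteSpace H]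
    (R : G → H) (hR_cont : Continuous R) (hR_bdd : BddAbove (Set.range fun g => ‖R g‖))
    (h : G → ℝ) (hdef : ∀ z : G, h z = Real.exp (-c * d z 1) / N)
    (g : G) (n : ℕ) (x : Fin n → G) (coef : Fin n → ℂ) :
    ∫ z, ‖∑ i, coef i • (Real.sqrt (h z) • R (z⁻¹ * (g * x i)))‖ ^ 2 ∂μ ≤
      Real.exp (c * d g 1) *
        ∫ z, ‖∑ i, coef i • (Real.sqrt (h z) • R (z⁻¹ * x i))‖ ^ 2 ∂μ :=
  stmt_6_general μ d hd_symm hd_tri hd_inv c hc N hN_pos hN_int R hR_cont hR_bdd h hdef g n x coef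
end

section
/- Let G be a group, H a Hilbert space, π a representation of G on H, K ⊆ H a π-invariant closed subspace containing vectors P'(x) with π(g)P'(x) = P'(gx), and let Q' : G → H satisfy ⟨P'(x), Q'(y)⟩ = φ(y⁻¹x) for all x, y ∈ G, where φ : G → ℂ. Let P_K be the orthogonal projection onto K, and set η = P_K Q'(e). Then for every y ∈ G, the restriction of π(y⁻¹)* to K satisfies π(y⁻¹)* η = P_K Q'(y), and consequently ‖π(y⁻¹)*η‖ ≤ ‖Q'(y)‖. -/
/-!
Both `π(y⁻¹)* η` and `P_K Q'(y)` lie in `K`, and they have the same inner products with every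
generator `P'(x)` of `K`: moving the adjoint across and using `π(y⁻¹) P'(x) = P'(y⁻¹x)`, both
equal `φ(y⁻¹x)`. Since the `P'(x)` span a dense subspace of `K`, the two vectors coincide, and the
norm bound is that of an orthogonal projection.
-/

open scoped InnerProductSpace

namespace Submodule

variable {𝕜 E : Type*} [RCLike 𝕜] [NormedAddCommGroup E] [InnerProductSpace 𝕜 E]

theorem eq_of_inner_eq_of_le_topologicalClosure_span {s : Set E} {K : Submodule 𝕜 E}
    (hK : K ≤ (span 𝕜 s).topologicalClosure) {u v : E} (hu : u ∈ K) (hv : v ∈ K)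
    (h : ∀ x ∈ s, ⟪u, x⟫_𝕜 = ⟪v, x⟫_𝕜) : u = v := by
  have hspan : span 𝕜 s ≤ (𝕜 ∙ (u - v))ᗮ := span_le.2 fun x hx ↦
    mem_orthogonal_singleton_iff_inner_right.2 <| by rw [inner_sub_left, h x hx, sub_self]
  have hclosure : K ≤ (𝕜 ∙ (u - v))ᗮ :=
    hK.trans <| topologicalClosure_minimal _ hspan (isClosed_orthogonal _)
  have hself : ⟪u - v, u - v⟫_𝕜 = 0 :=
    mem_orthogonal_singleton_iff_inner_right.1 <| hclosure <| K.sub_mem hu hv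
  exact sub_eq_zero.1 <| inner_self_eq_zero.1 hself

theorem inner_adjoint_orthogonalProjectionOnto {K : Submodule 𝕜 E} [CompleteSpace K]
    (A : K →L[𝕜] K) (z : E) (v : K) :
    ⟪(A.adjoint (K.orthogonalProjectionOnto z) : E), v⟫_𝕜 = ⟪z, (A v : E)⟫_𝕜 := by
  rw [← coe_inner, A.adjoint_inner_left, inner_orthogonalProjectionOnto_eq_of_mem_right]

end Submodule

theorem stmt_12_general {G : Type*} [Group G]
    {H : Type*} [NormedAddCommGroup H] [InnerProductSpace ℂ H]
    (P' Q' : G → H) (φ : G → ℂ)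
    (hPQ : ∀ x y : G, (inner ℂ (Q' y) (P' x) : ℂ) = φ (y⁻¹ * x))
    (K : Submodule ℂ H)
    (hKdef : K = (Submodule.span ℂ (Set.range P')).topologicalClosure)
    (hmem : ∀ x : G, P' x ∈ K) [CompleteSpace K]
    (πK : G →* (K ≃L[ℂ] K))
    (hπ : ∀ g x : G, πK g ⟨P' x, hmem x⟩ = ⟨P' (g * x), hmem (g * x)⟩) :
    ∀ y : G,
      ContinuousLinearMap.adjoint ((πK y⁻¹).toContinuousLinearMap)
          (K.orthogonalProjectionOnto (Q' 1))
        = K.orthogonalProjectionOnto (Q' y) ∧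
      ‖ContinuousLinearMap.adjoint ((πK y⁻¹).toContinuousLinearMap)
          (K.orthogonalProjectionOnto (Q' 1))‖ ≤ ‖Q' y‖ := by
  intro y
  have hinner : ∀ x : G,
      ⟪((πK y⁻¹ : K →L[ℂ] K).adjoint (K.orthogonalProjectionOnto (Q' 1)) : H), P' x⟫_ℂ
        = ⟪(K.orthogonalProjectionOnto (Q' y) : H), P' x⟫_ℂ := by
    intro x
    calc _ = ⟪Q' 1, ((πK y⁻¹ ⟨P' x, hmem x⟩ : K) : H)⟫_ℂ :=
          Submodule.inner_adjoint_orthogonalProjectionOnto _ _ ⟨P' x, hmem x⟩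
      _ = ⟪Q' y, P' x⟫_ℂ := by rw [hπ, hPQ, hPQ, inv_one, one_mul]
      _ = _ := (K.inner_orthogonalProjectionOnto_eq_of_mem_right ⟨P' x, hmem x⟩ (Q' y)).symm
  have heq : (πK y⁻¹ : K →L[ℂ] K).adjoint (K.orthogonalProjectionOnto (Q' 1))
      = K.orthogonalProjectionOnto (Q' y) :=
    Subtype.ext <| Submodule.eq_of_inner_eq_of_le_topologicalClosure_span hKdef.le
      (Submodule.coe_mem _) (Submodule.coe_mem _) (Set.forall_mem_range.2 hinner)
  exact ⟨heq, heq ▸ K.norm_orthogonalProjectionOnto_apply_le (Q' y)⟩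

/-- Let `K` be the closed linear span of `{P'(x) : x ∈ G}`, invariant under a
representation `π_K` of `G` on `K` with `π_K(g) P'(x) = P'(gx)`, and suppose
`⟨P'(x), Q'(y)⟩ = φ(y⁻¹x)`. With `η = P_K Q'(e)`, one has
`π_K(y⁻¹)* η = P_K Q'(y)` for every `y`, and hence `‖π_K(y⁻¹)* η‖ ≤ ‖Q'(y)‖`.
(The paper's first-variable-linear inner product `⟨u,v⟩` is Mathlib's `inner v u`.) -/
theorem stmt_12 {G : Type*} [Group G]
    {H : Type*} [NormedAddCommGroup H] [InnerProductSpace ℂ H] [CompleteSpace H]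
    (P' Q' : G → H) (φ : G → ℂ)
    (hPQ : ∀ x y : G, (inner ℂ (Q' y) (P' x) : ℂ) = φ (y⁻¹ * x))
    (K : Submodule ℂ H)
    (hKdef : K = (Submodule.span ℂ (Set.range P')).topologicalClosure)
    (hmem : ∀ x : G, P' x ∈ K) [CompleteSpace K]
    (πK : G →* (K ≃L[ℂ] K))
    (hπ : ∀ g x : G, πK g ⟨P' x, hmem x⟩ = ⟨P' (g * x), hmem (g * x)⟩) :
    ∀ y : G,
      ContinuousLinearMap.adjoint ((πK y⁻¹).toContinuousLinearMap)
          (K.orthogonalProjectionOnto (Q' 1))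
        = K.orthogonalProjectionOnto (Q' y) ∧
      ‖ContinuousLinearMap.adjoint ((πK y⁻¹).toContinuousLinearMap)
          (K.orthogonalProjectionOnto (Q' 1))‖ ≤ ‖Q' y‖ :=
  stmt_12_general P' Q' φ hPQ K hKdef hmem πK hπ
end
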